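/- Let ς₁,…,ςₗ > 0 and s₁,…,sₙ ∈ ℝ, not all of s₁,…,sₙ zero. The function λ ↦ ( √( Σ_{i=1}^{ℓ} (sᵢ/(ςᵢ²+λ))² + Σ_{i=ℓ+1}^{n} (sᵢ/λ)² ) )⁻¹ is concave on (0,∞). -/

import Mathlib

open Matrix Finset

noncomputable def enorm' {n : ℕ} (v : Fin n → ℝ) : ℝ := Real.sqrt (∑ i, v i ^ 2)

noncomputable def specNorm {n : ℕ} (A : Matrix (Fin n) (Fin n) ℝ) : ℝ :=
  sSup ((fun v => enorm' (A.mulVec v)) '' {v | enorm' v ≤ 1})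

noncomputable def pstep {n : ℕ} (J : Matrix (Fin n) (Fin n) ℝ) (r : Fin n → ℝ) (lam : ℝ) :
    Fin n → ℝ :=
  -((Jᵀ * J + lam • (1 : Matrix (Fin n) (Fin n) ℝ))⁻¹.mulVec (Jᵀ.mulVec r))


private lemma hasDerivAt_sumpow {n : ℕ} (c a : Fin n → ℝ) (ha : ∀ i, 0 ≤ a i) (k : ℕ)
    {x : ℝ} (hx : 0 < x) :
    HasDerivAt (fun y => ∑ i, c i * ((a i + y)⁻¹) ^ k)
      (-(k : ℝ) * ∑ i, c i * ((a i + x)⁻¹) ^ (k + 1)) x := by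
  have h : ∀ i : Fin n, HasDerivAt (fun y => c i * ((a i + y)⁻¹) ^ k)
      (-(k : ℝ) * (c i * ((a i + x)⁻¹) ^ (k + 1))) x := by
    intro i
    have hpos : 0 < a i + x := by linarith [ha i]
    have hne : a i + x ≠ 0 := ne_of_gt hpos
    have h1 : HasDerivAt (fun y => a i + y) 1 x := (hasDerivAt_id x).const_add (a i)
    have h2 : HasDerivAt (fun y => (a i + y)⁻¹) (-1 / (a i + x) ^ 2) x := h1.inv hne
    have h3 := (h2.fun_pow k).const_mul (c i)
    refine h3.congr_deriv ?_
    rcases Nat.eq_zero_or_pos k with hk | hk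
    · subst hk; simp
    · obtain ⟨m, rfl⟩ : ∃ m, k = 1 + m := ⟨k - 1, by omega⟩
      rw [show 1 + m - 1 = m by omega]
      push_cast
      rw [div_eq_mul_inv, ← inv_pow]
      ring
  have hsum := HasDerivAt.fun_sum (fun i (_ : i ∈ Finset.univ) => h i)
  refine hsum.congr_deriv ?_
  rw [Finset.mul_sum]

private lemma concave_inv_sqrt_sum {n : ℕ} (c a : Fin n → ℝ) (hc : ∀ i, 0 ≤ c i)
    (ha : ∀ i, 0 ≤ a i)
    (hF : ∀ x : ℝ, 0 < x → 0 < ∑ i, c i * ((a i + x)⁻¹) ^ 2) :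
    ConcaveOn ℝ (Set.Ioi 0)
      (fun x => (Real.sqrt (∑ i, c i * ((a i + x)⁻¹) ^ 2))⁻¹) := by
  set F : ℝ → ℝ := fun x => ∑ i, c i * ((a i + x)⁻¹) ^ 2 with hFdef
  set F1 : ℝ → ℝ := fun x => ∑ i, c i * ((a i + x)⁻¹) ^ 3 with hF1def
  set F2 : ℝ → ℝ := fun x => ∑ i, c i * ((a i + x)⁻¹) ^ 4 with hF2def
  set G : ℝ → ℝ := fun x => F1 x / (F x * Real.sqrt (F x)) with hGdef
  set G2 : ℝ → ℝ := fun x =>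
    ((-3 * F2 x) * (F x * Real.sqrt (F x)) -
      F1 x * ((-2 * F1 x) * Real.sqrt (F x) + F x * ((-2 * F1 x) / (2 * Real.sqrt (F x))))) /
      (F x * Real.sqrt (F x)) ^ 2 with hG2def
  -- basic facts at a point x > 0
  have key : ∀ x : ℝ, 0 < x →
      HasDerivAt (fun y => (Real.sqrt (F y))⁻¹) (G x) x ∧ HasDerivAt G (G2 x) x ∧ G2 x ≤ 0 := by
    intro x hx
    have hFx : 0 < F x := hF x hx
    have hsF : 0 < Real.sqrt (F x) := Real.sqrt_pos.mpr hFx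
    have hsq : Real.sqrt (F x) ^ 2 = F x := Real.sq_sqrt hFx.le
    have hF' : HasDerivAt F (-(2 : ℝ) * F1 x) x := by
      have h := hasDerivAt_sumpow c a ha 2 hx
      exact_mod_cast h
    have hF1' : HasDerivAt F1 (-(3 : ℝ) * F2 x) x := by
      have h := hasDerivAt_sumpow c a ha 3 hx
      exact_mod_cast h
    have hsqrt : HasDerivAt (fun y => Real.sqrt (F y))
        ((-(2 : ℝ) * F1 x) / (2 * Real.sqrt (F x))) x := hF'.sqrt hFx.ne'
    have hden : HasDerivAt (fun y => F y * Real.sqrt (F y))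
        ((-(2 : ℝ) * F1 x) * Real.sqrt (F x) + F x * ((-(2 : ℝ) * F1 x) / (2 * Real.sqrt (F x))))
        x := hF'.mul hsqrt
    have hdenne : F x * Real.sqrt (F x) ≠ 0 := by positivity
    refine ⟨?_, ?_, ?_⟩
    · have := hsqrt.fun_inv hsF.ne'
      refine this.congr_deriv ?_
      rw [hGdef]
      field_simp
      rw [hsq]
    · exact hF1'.div hden hdenne
    · rw [hG2def]
      apply div_nonpos_of_nonpos_of_nonneg _ (sq_nonneg _)
      have hCS : F1 x ^ 2 ≤ F x * F2 x := by
        have h := Finset.sum_mul_sq_le_sq_mul_sq Finset.univ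
          (fun i => Real.sqrt (c i) * (a i + x)⁻¹)
          (fun i => Real.sqrt (c i) * ((a i + x)⁻¹) ^ 2)
        have e1 : ∀ i : Fin n, (Real.sqrt (c i) * (a i + x)⁻¹) *
            (Real.sqrt (c i) * ((a i + x)⁻¹) ^ 2) = c i * ((a i + x)⁻¹) ^ 3 := by
          intro i
          rw [show (Real.sqrt (c i) * (a i + x)⁻¹) * (Real.sqrt (c i) * ((a i + x)⁻¹) ^ 2)
            = (Real.sqrt (c i) * Real.sqrt (c i)) * ((a i + x)⁻¹) ^ 3 by ring,
            Real.mul_self_sqrt (hc i)]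
        have e2 : ∀ i : Fin n, (Real.sqrt (c i) * (a i + x)⁻¹) ^ 2
            = c i * ((a i + x)⁻¹) ^ 2 := by
          intro i; rw [mul_pow, Real.sq_sqrt (hc i)]
        have e3 : ∀ i : Fin n, (Real.sqrt (c i) * ((a i + x)⁻¹) ^ 2) ^ 2
            = c i * ((a i + x)⁻¹) ^ 4 := by
          intro i; rw [mul_pow, Real.sq_sqrt (hc i), ← pow_mul]
        simp only [Finset.sum_congr rfl (fun i _ => e1 i),
          Finset.sum_congr rfl (fun i _ => e2 i),
          Finset.sum_congr rfl (fun i _ => e3 i)] at h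
        exact h
      have h5 : F x * ((-2 * F1 x) / (2 * Real.sqrt (F x))) = -(F1 x * Real.sqrt (F x)) := by
        field_simp; linear_combination F1 x * hsq
      rw [h5]
      have : (-3 * F2 x) * (F x * Real.sqrt (F x)) -
          F1 x * ((-2 * F1 x) * Real.sqrt (F x) + -(F1 x * Real.sqrt (F x)))
          = 3 * Real.sqrt (F x) * (F1 x ^ 2 - F x * F2 x) := by ring
      rw [this]
      have : F1 x ^ 2 - F x * F2 x ≤ 0 := by linarith
      nlinarith [hsF.le]
  -- conclude
  have hIoi : interior (Set.Ioi (0:ℝ)) = Set.Ioi 0 := interior_Ioi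
  refine concaveOn_of_hasDerivWithinAt2_nonpos (f' := G) (f'' := G2) (convex_Ioi 0) ?_ ?_ ?_ ?_
  · intro x hx
    exact ((key x hx).1).continuousAt.continuousWithinAt
  · intro x hx
    rw [hIoi] at hx ⊢
    exact ((key x hx).1).hasDerivWithinAt
  · intro x hx
    rw [hIoi] at hx ⊢
    exact ((key x hx).2.1).hasDerivWithinAt
  · intro x hx
    rw [hIoi] at hx
    exact (key x hx).2.2

theorem stmt_11 {n ℓ : ℕ} (ς s : Fin n → ℝ)
    (hς : ∀ i : Fin n, (i : ℕ) < ℓ → 0 < ς i)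
    (hs : s ≠ 0)
    (hpos : ∀ lam : ℝ, 0 < lam →
      0 < ∑ i ∈ Finset.univ.filter (fun i : Fin n => (i : ℕ) < ℓ), (s i / (ς i ^ 2 + lam)) ^ 2 +
          ∑ i ∈ Finset.univ.filter (fun i : Fin n => ¬ (i : ℕ) < ℓ), (s i / lam) ^ 2) :
    ConcaveOn ℝ (Set.Ioi 0) (fun lam =>
      (Real.sqrt
        (∑ i ∈ Finset.univ.filter (fun i : Fin n => (i : ℕ) < ℓ), (s i / (ς i ^ 2 + lam)) ^ 2 +
         ∑ i ∈ Finset.univ.filter (fun i : Fin n => ¬ (i : ℕ) < ℓ), (s i / lam) ^ 2))⁻¹) := by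
  set c : Fin n → ℝ := fun i => s i ^ 2 with hcdef
  set a : Fin n → ℝ := fun i => if (i : ℕ) < ℓ then ς i ^ 2 else 0 with hadef
  have hc : ∀ i, 0 ≤ c i := fun i => sq_nonneg _
  have ha : ∀ i, 0 ≤ a i := by
    intro i; rw [hadef]; dsimp only; split
    · exact sq_nonneg _
    · exact le_refl 0
  have hEq : ∀ lam : ℝ,
      (∑ i ∈ Finset.univ.filter (fun i : Fin n => (i : ℕ) < ℓ), (s i / (ς i ^ 2 + lam)) ^ 2 +
       ∑ i ∈ Finset.univ.filter (fun i : Fin n => ¬ (i : ℕ) < ℓ), (s i / lam) ^ 2)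
      = ∑ i, c i * ((a i + lam)⁻¹) ^ 2 := by
    intro lam
    rw [← Finset.sum_filter_add_sum_filter_not Finset.univ (fun i : Fin n => (i : ℕ) < ℓ)
      (fun i => c i * ((a i + lam)⁻¹) ^ 2)]
    congr 1
    · refine Finset.sum_congr rfl fun i hi => ?_
      rw [Finset.mem_filter] at hi
      rw [hadef]; dsimp only; rw [if_pos hi.2, div_eq_mul_inv, mul_pow]
    · refine Finset.sum_congr rfl fun i hi => ?_
      rw [Finset.mem_filter] at hi
      rw [hadef]; dsimp only; rw [if_neg hi.2, zero_add, div_eq_mul_inv, mul_pow]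
  have hF : ∀ x : ℝ, 0 < x → 0 < ∑ i, c i * ((a i + x)⁻¹) ^ 2 := by
    intro x hx
    rw [← hEq x]
    exact hpos x hx
  have h := concave_inv_sqrt_sum c a hc ha hF
  simp only [hEq]
  exact h
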